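/- Let A be a Banach Q_p-algebra and let X = Spa of the relative open unit polydisc of dimension d over A with coordinates t_1, …, t_d. Let 𝔫 be the abelian Lie algebra of rank d over A acting on the Fréchet algebra O(X) by the derivations ∂/∂t_1, …, ∂/∂t_d. Then the Lie algebra cohomology RΓ(𝔫, O(X)) is concentrated in degree 0 and equals A, i.e., the de Rham-type complex 0 → O(X) → O(X)^d → ⋯ → O(X) → 0 given by the Koszul complex of the commuting derivations ∂/∂t_i is a resolution of A. -/

import Mathlib

open Filter

/-!
STATEMENT 10: Let `A` be a Banach `ℚ_p`-algebra and `X` the relative open unit polydisc of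
dimension `d` over `A`, with coordinates `t_1, …, t_d`.  Let the abelian Lie algebra `𝔫` of
rank `d` act on the Fréchet algebra `O(X)` by the derivations `∂/∂t_i`.  Then
`RΓ(𝔫, O(X)) = A[0]`: the Koszul complex `0 → O(X) → O(X)^d → ⋯ → O(X) → 0` of the
commuting derivations `∂/∂t_i` is a resolution of `A`.

`O(X)` is the space of power series `∑ a_α t^α` with `‖a_α‖ r^{|α|} → 0` for all `r < 1`
(the predicate `IsConvergent` below), viewed inside `MvPowerSeries (Fin d) A`.  The Lie
algebra cohomology of the abelian Lie algebra `𝔫` acting by the commuting derivations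
`∂/∂t_i` is computed by the Koszul complex, whose `k`-th term is indexed by the `k`-element
subsets of `Fin d` and whose differential is `koszulD` below.
-/

/-- The formal partial derivative `∂/∂t_i` on multivariate power series. -/
noncomputable def pderivPS {A : Type*} [NormedCommRing A] {d : ℕ} (i : Fin d)
    (f : MvPowerSeries (Fin d) A) : MvPowerSeries (Fin d) A :=
  fun α => (α i + 1 : ℕ) • MvPowerSeries.coeff (R := A) (α + Finsupp.single i 1) f

/-- `f ∈ O(X)`: the coefficients of `f` tend to zero with respect to every radius `r < 1`. -/
def IsConvergent {A : Type*} [NormedCommRing A] {d : ℕ}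
    (f : MvPowerSeries (Fin d) A) : Prop :=
  ∀ r : ℝ, 0 ≤ r → r < 1 →
    Tendsto (fun α : Fin d →₀ ℕ => ‖MvPowerSeries.coeff (R := A) α f‖ * r ^ (α.sum fun _ n => n))
      cofinite (nhds 0)

/-- The Koszul differential for the commuting derivations `∂/∂t_i`. -/
noncomputable def koszulD {A : Type*} [NormedCommRing A] {d : ℕ} (k : ℕ)
    (ω : {s : Finset (Fin d) // s.card = k} → MvPowerSeries (Fin d) A) :
    {s : Finset (Fin d) // s.card = k + 1} → MvPowerSeries (Fin d) A :=
  fun s => ∑ i ∈ s.1.attach,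
    ((-1 : ℤ) ^ (s.1.filter (fun b => b < i.1)).card) •
      pderivPS i.1 (ω ⟨s.1.erase i.1, by rw [Finset.card_erase_of_mem i.2, s.2]; rfl⟩)

open Finset MvPowerSeries Topology

/-!
On `t^α dt_s` the Koszul differential `d` and the contraction `ι` with the Euler vector field
`∑ⱼ tⱼ ∂ⱼ` satisfy Cartan's formula `dι + ιd = |α| + #s`. Dividing the `t^α dt_s`-component by
`|α| + #s` commutes with `d`, so `h = (|α| + #s)⁻¹ ι` satisfies `d h ω = ω` for every closed
cochain `ω` of positive degree. In `ℚ_p` we have `‖1/n‖ ≤ n`, so this division costs only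
polynomial growth in `|α|`, which is absorbed by enlarging the radius `r < 1`: `h` preserves
`O(X)`. In degree `0`, Euler's identity `∑ tᵢ ∂ᵢ f = |α| f` (coefficientwise) shows that a
series killed by every `∂ᵢ` is constant.
-/

section PartialDerivative

variable {A : Type*} [NormedCommRing A] {d : ℕ}

lemma coeff_pderivPS (i : Fin d) (f : MvPowerSeries (Fin d) A) (α : Fin d →₀ ℕ) :
    coeff α (pderivPS i f) = (α i + 1) • coeff (α + Finsupp.single i 1) f :=
  rfl

lemma pderivPS_add (i : Fin d) (f g : MvPowerSeries (Fin d) A) :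
    pderivPS i (f + g) = pderivPS i f + pderivPS i g := by
  ext α
  simp [coeff_pderivPS]

lemma pderivPS_zero (i : Fin d) : pderivPS i (0 : MvPowerSeries (Fin d) A) = 0 := by
  ext α
  simp [coeff_pderivPS]

lemma pderivPS_sum {ι : Type*} (i : Fin d) (s : Finset ι) (f : ι → MvPowerSeries (Fin d) A) :
    pderivPS i (∑ j ∈ s, f j) = ∑ j ∈ s, pderivPS i (f j) :=
  map_sum (AddMonoidHom.mk' (pderivPS i) (pderivPS_add i)) f s

lemma pderivPS_zsmul (i : Fin d) (n : ℤ) (f : MvPowerSeries (Fin d) A) :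
    pderivPS i (n • f) = n • pderivPS i f :=
  map_zsmul (AddMonoidHom.mk' (pderivPS i) (pderivPS_add i)) n f

lemma coeff_add_single_X_mul (j : Fin d) (f : MvPowerSeries (Fin d) A) (β : Fin d →₀ ℕ) :
    coeff (β + Finsupp.single j 1) (X j * f) = coeff β f := by
  rw [X, add_comm, coeff_add_monomial_mul, one_mul]

lemma coeff_X_mul_of_eq_zero {j : Fin d} (f : MvPowerSeries (Fin d) A) {α : Fin d →₀ ℕ}
    (hα : α j = 0) : coeff α (X j * f) = 0 := by
  rw [X, coeff_monomial_mul, if_neg]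
  simp [Finsupp.single_le_iff, hα]

lemma eq_add_single_of_ne_zero {σ : Type*} {α : σ →₀ ℕ} {j : σ} (hα : α j ≠ 0) :
    α = (α - Finsupp.single j 1) + Finsupp.single j 1 :=
  (tsub_add_cancel_of_le (Finsupp.single_le_iff.mpr (Nat.one_le_iff_ne_zero.mpr hα))).symm

lemma pderivPS_X_mul_self (i : Fin d) (f : MvPowerSeries (Fin d) A) :
    pderivPS i (X i * f) = f + X i * pderivPS i f := by
  ext α
  by_cases hα : α i = 0
  · simp [coeff_pderivPS, coeff_add_single_X_mul, coeff_X_mul_of_eq_zero _ hα, hα]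
  · rw [eq_add_single_of_ne_zero hα]
    simp only [coeff_pderivPS, coeff_add_single_X_mul, map_add, Finsupp.add_apply,
      Finsupp.single_eq_same]
    rw [add_smul, add_smul, one_smul, add_comm]

lemma pderivPS_X_mul_of_ne {i j : Fin d} (hij : i ≠ j) (f : MvPowerSeries (Fin d) A) :
    pderivPS i (X j * f) = X j * pderivPS i f := by
  ext α
  by_cases hα : α j = 0
  · rw [coeff_pderivPS, coeff_X_mul_of_eq_zero, coeff_X_mul_of_eq_zero _ hα, smul_zero]
    simp [hij, hα]
  · rw [eq_add_single_of_ne_zero hα, coeff_pderivPS, add_right_comm, coeff_add_single_X_mul,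
      coeff_add_single_X_mul, coeff_pderivPS]
    simp [hij.symm]

lemma coeff_X_mul_pderivPS_self (i : Fin d) (f : MvPowerSeries (Fin d) A) (α : Fin d →₀ ℕ) :
    coeff α (X i * pderivPS i f) = α i • coeff α f := by
  by_cases hα : α i = 0
  · rw [coeff_X_mul_of_eq_zero _ hα, hα, zero_smul]
  · conv_lhs => rw [eq_add_single_of_ne_zero hα]
    rw [coeff_add_single_X_mul, coeff_pderivPS, ← eq_add_single_of_ne_zero hα]
    congr 1
    simp only [Finsupp.tsub_apply, Finsupp.single_eq_same]
    omega

lemma coeff_sum_X_mul_pderivPS (f : MvPowerSeries (Fin d) A) (α : Fin d →₀ ℕ) :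
    coeff α (∑ i, X i * pderivPS i f) = α.degree • coeff α f := by
  simp only [map_sum, coeff_X_mul_pderivPS_self, Finsupp.degree_eq_sum, Finset.sum_smul]

lemma exists_eq_C_of_pderivPS_eq_zero [IsAddTorsionFree A] {f : MvPowerSeries (Fin d) A}
    (hf : ∀ i, pderivPS i f = 0) : ∃ a : A, f = C a := by
  refine ⟨constantCoeff f, ext fun α => ?_⟩
  rcases eq_or_ne α 0 with rfl | hα
  · simp
  have hEuler := coeff_sum_X_mul_pderivPS f α
  simp only [hf, mul_zero, sum_const_zero, map_zero] at hEuler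
  rw [coeff_C, if_neg hα]
  exact (nsmul_right_injective (mt (Finsupp.degree_eq_zero_iff α).mp hα)
    (hEuler.symm.trans (nsmul_zero _).symm))

lemma pderivPS_C (i : Fin d) (a : A) : pderivPS i (C a) = 0 := by
  ext α
  rw [coeff_pderivPS, coeff_C, if_neg, smul_zero, map_zero]
  intro h
  simpa using congrArg (· i) h

lemma forall_pderivPS_eq_zero_iff [IsAddTorsionFree A] {f : MvPowerSeries (Fin d) A} :
    (∀ i, pderivPS i f = 0) ↔ ∃ a : A, f = C a :=
  ⟨exists_eq_C_of_pderivPS_eq_zero, by rintro ⟨a, rfl⟩ i; exact pderivPS_C i a⟩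

end PartialDerivative

namespace Koszul

variable {d : ℕ}

def sign (s : Finset (Fin d)) (i : Fin d) : ℤ := (-1) ^ #{b ∈ s | b < i}

lemma sign_erase_self (s : Finset (Fin d)) (i : Fin d) : sign (s.erase i) i = sign s i := by
  rw [sign, filter_erase, erase_eq_of_notMem (by simp), sign]

lemma sign_insert_self (s : Finset (Fin d)) (j : Fin d) : sign (insert j s) j = sign s j := by
  rw [sign, filter_insert, if_neg (lt_irrefl j), sign]

lemma sign_mul_self (s : Finset (Fin d)) (i : Fin d) : sign s i * sign s i = 1 := by
  rw [sign, ← pow_add, Even.neg_one_pow ⟨_, rfl⟩]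

lemma sign_mul_sign_erase {s : Finset (Fin d)} {i j : Fin d} (hi : i ∈ s) (hj : j ∉ s) :
    sign s i * sign (s.erase i) j = -(sign s j * sign (insert j s) i) := by
  have hij : i ≠ j := ne_of_mem_of_not_mem hi hj
  unfold sign
  rw [filter_erase, filter_insert]
  rcases lt_or_gt_of_ne hij with h | h
  · rw [if_neg (asymm h), card_erase_of_mem (by simp [hi, h])]
    obtain ⟨m, hm⟩ : ∃ m, #{b ∈ s | b < j} = m + 1 :=
      Nat.exists_eq_add_one.mpr (card_pos.mpr ⟨i, by simp [hi, h]⟩)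
    rw [hm]
    simp [pow_succ, mul_comm]
  · rw [if_pos h, erase_eq_of_notMem (by simp [asymm h]), card_insert_of_notMem (by simp [hj])]
    simp [pow_succ, mul_comm]

variable {A : Type*} [NormedCommRing A]

noncomputable def diff (ω : Finset (Fin d) → MvPowerSeries (Fin d) A) (s : Finset (Fin d)) :
    MvPowerSeries (Fin d) A :=
  ∑ i ∈ s, sign s i • pderivPS i (ω (s.erase i))

noncomputable def eulerContraction (ω : Finset (Fin d) → MvPowerSeries (Fin d) A)
    (s : Finset (Fin d)) : MvPowerSeries (Fin d) A :=
  ∑ j ∈ sᶜ, sign s j • (X j * ω (insert j s))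

lemma diff_eulerContraction (ω : Finset (Fin d) → MvPowerSeries (Fin d) A) (s : Finset (Fin d)) :
    diff (eulerContraction ω) s = #s • ω s + ∑ i ∈ s, X i * pderivPS i (ω s) +
      ∑ i ∈ s, ∑ j ∈ sᶜ,
        (sign s i * sign (s.erase i) j) • (X j * pderivPS i (ω (insert j (s.erase i)))) := by
  rw [← sum_const, ← sum_add_distrib, ← sum_add_distrib, diff]
  refine sum_congr rfl fun i hi => ?_
  rw [eulerContraction, pderivPS_sum, compl_erase, sum_insert (by simp [hi]), smul_add,
    pderivPS_zsmul, insert_erase hi, pderivPS_X_mul_self, smul_smul, sign_erase_self,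
    sign_mul_self, one_smul, smul_sum]
  refine congrArg _ (sum_congr rfl fun j hj => ?_)
  rw [pderivPS_zsmul, pderivPS_X_mul_of_ne (ne_of_mem_of_not_mem hi (mem_compl.mp hj)),
    smul_smul]

lemma eulerContraction_diff (ω : Finset (Fin d) → MvPowerSeries (Fin d) A) (s : Finset (Fin d)) :
    eulerContraction (diff ω) s = ∑ j ∈ sᶜ, X j * pderivPS j (ω s) +
      ∑ j ∈ sᶜ, ∑ i ∈ s,
        (sign s j * sign (insert j s) i) • (X j * pderivPS i (ω (insert j (s.erase i)))) := by
  rw [← sum_add_distrib, eulerContraction]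
  refine sum_congr rfl fun j hj => ?_
  have hjs : j ∉ s := mem_compl.mp hj
  rw [diff, sum_insert hjs, erase_insert hjs, sign_insert_self, mul_add, smul_add,
    mul_smul_comm, smul_smul, sign_mul_self, one_smul, mul_sum, smul_sum]
  refine congrArg _ (sum_congr rfl fun i hi => ?_)
  rw [erase_insert_of_ne (ne_of_mem_of_not_mem hi hjs).symm, mul_smul_comm, smul_smul]

lemma diff_eulerContraction_add_eulerContraction_diff
    (ω : Finset (Fin d) → MvPowerSeries (Fin d) A) (s : Finset (Fin d)) :
    diff (eulerContraction ω) s + eulerContraction (diff ω) s =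
      #s • ω s + ∑ i, X i * pderivPS i (ω s) := by
  have hcancel : ∑ i ∈ s, ∑ j ∈ sᶜ,
        ((sign s i * sign (s.erase i) j) • (X j * pderivPS i (ω (insert j (s.erase i)))) +
          (sign s j * sign (insert j s) i) • (X j * pderivPS i (ω (insert j (s.erase i))))) =
      0 :=
    sum_eq_zero fun i hi => sum_eq_zero fun j hj => by
      rw [← add_smul, sign_mul_sign_erase hi (mem_compl.mp hj), neg_add_cancel, zero_smul]
  rw [diff_eulerContraction, eulerContraction_diff, sum_comm (s := sᶜ),
    ← sum_add_sum_compl s fun i => X i * pderivPS i (ω s)]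
  simp only [sum_add_distrib] at hcancel
  linear_combination hcancel

variable (𝕜 : Type*) [Field 𝕜] [Module 𝕜 A]

-- Inverts `dι + ιd` away from `α = 0, s = ∅`, where `0⁻¹ = 0`.
noncomputable def eulerInv (ω : Finset (Fin d) → MvPowerSeries (Fin d) A) (s : Finset (Fin d)) :
    MvPowerSeries (Fin d) A :=
  fun α => ((α.degree + #s : ℕ) : 𝕜)⁻¹ • coeff α (ω s)

lemma coeff_eulerInv (ω : Finset (Fin d) → MvPowerSeries (Fin d) A) (s : Finset (Fin d))
    (α : Fin d →₀ ℕ) :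
    coeff α (eulerInv 𝕜 ω s) = ((α.degree + #s : ℕ) : 𝕜)⁻¹ • coeff α (ω s) :=
  rfl

lemma diff_eulerInv (ω : Finset (Fin d) → MvPowerSeries (Fin d) A) :
    diff (eulerInv 𝕜 ω) = eulerInv 𝕜 (diff ω) := by
  funext s
  ext α
  rw [coeff_eulerInv, diff, diff, map_sum, map_sum, smul_sum]
  refine sum_congr rfl fun i hi => ?_
  have hdeg : (α + Finsupp.single i 1).degree + #(s.erase i) = α.degree + #s := by
    rw [map_add, Finsupp.degree_single, card_erase_of_mem hi]
    have := card_pos.mpr ⟨i, hi⟩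
    omega
  rw [map_zsmul, map_zsmul, coeff_pderivPS, coeff_pderivPS, coeff_eulerInv, hdeg,
    smul_comm (α i + 1), smul_comm (sign s i)]

noncomputable def homotopy (ω : Finset (Fin d) → MvPowerSeries (Fin d) A) :
    Finset (Fin d) → MvPowerSeries (Fin d) A :=
  eulerInv 𝕜 (eulerContraction ω)

lemma diff_homotopy [CharZero 𝕜] {ω : Finset (Fin d) → MvPowerSeries (Fin d) A}
    (hω : diff ω = 0) {s : Finset (Fin d)} (hs : s.Nonempty) :
    diff (homotopy 𝕜 ω) s = ω s := by
  have hcartan := diff_eulerContraction_add_eulerContraction_diff ω s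
  simp only [hω, eulerContraction, Pi.zero_apply, mul_zero, smul_zero, sum_const_zero,
    add_zero] at hcartan
  ext α
  have hne : ((α.degree + #s : ℕ) : 𝕜) ≠ 0 :=
    Nat.cast_ne_zero.mpr (by have := hs.card_pos; omega)
  rw [homotopy, diff_eulerInv, coeff_eulerInv, hcartan, map_add, coeff_sum_X_mul_pderivPS,
    map_nsmul, ← add_smul, ← Nat.cast_smul_eq_nsmul 𝕜, add_comm #s, inv_smul_smul₀ hne]

noncomputable def extendByZero {k : ℕ}
    (ω : {s : Finset (Fin d) // #s = k} → MvPowerSeries (Fin d) A) (s : Finset (Fin d)) :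
    MvPowerSeries (Fin d) A :=
  if h : #s = k then ω ⟨s, h⟩ else 0

lemma extendByZero_of_card_eq {k : ℕ}
    (ω : {s : Finset (Fin d) // #s = k} → MvPowerSeries (Fin d) A) {s : Finset (Fin d)}
    (h : #s = k) :
    extendByZero ω s = ω ⟨s, h⟩ :=
  dif_pos h

lemma extendByZero_val {k : ℕ} (ω : {s : Finset (Fin d) // #s = k} → MvPowerSeries (Fin d) A) :
    (fun s : {s : Finset (Fin d) // #s = k} => extendByZero ω s.1) = ω :=
  funext fun s => dif_pos s.2

lemma koszulD_eq_diff {k : ℕ} (ω : Finset (Fin d) → MvPowerSeries (Fin d) A)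
    (s : {s : Finset (Fin d) // #s = k + 1}) :
    koszulD k (fun t => ω t.1) s = diff ω s.1 :=
  sum_attach s.1 fun i => sign s.1 i • pderivPS i (ω (s.1.erase i))

lemma diff_extendByZero {k : ℕ}
    (ω : {s : Finset (Fin d) // #s = k} → MvPowerSeries (Fin d) A) :
    diff (extendByZero ω) = extendByZero (koszulD k ω) := by
  funext s
  by_cases hs : #s = k + 1
  · rw [extendByZero_of_card_eq _ hs, ← koszulD_eq_diff _ ⟨s, hs⟩, extendByZero_val]
  · rw [extendByZero, dif_neg hs, diff]
    refine sum_eq_zero fun i hi => ?_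
    have := card_pos.mpr ⟨i, hi⟩
    rw [extendByZero, dif_neg (by rw [card_erase_of_mem hi]; omega), pderivPS_zero, smul_zero]

theorem koszulD_homotopy [CharZero 𝕜] {k : ℕ}
    (ω : {s : Finset (Fin d) // #s = k + 1} → MvPowerSeries (Fin d) A)
    (hω : koszulD (k + 1) ω = 0) :
    koszulD k (fun t => homotopy 𝕜 (extendByZero ω) t.1) = ω := by
  have hclosed : diff (extendByZero ω) = 0 := by
    funext s
    rw [diff_extendByZero, hω, extendByZero]
    split_ifs <;> rfl
  funext s
  rw [koszulD_eq_diff, diff_homotopy 𝕜 hclosed (card_pos.mp (by omega)),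
    extendByZero_of_card_eq _ s.2]

end Koszul

lemma tendsto_cofinite_of_add_single {σ : Type*} {G : (σ →₀ ℕ) → ℝ} (j : σ)
    (hG : ∀ α, α j = 0 → G α = 0)
    (h : Tendsto (fun β => G (β + Finsupp.single j 1)) cofinite (𝓝 0)) :
    Tendsto G cofinite (𝓝 0) := by
  intro U hU
  have h0 : (0 : ℝ) ∈ U := mem_of_mem_nhds hU
  refine ((mem_cofinite.mp (h hU)).image (· + Finsupp.single j 1)).subset fun α hα => ?_
  have hαj : α j ≠ 0 := fun hα0 => hα (by simp [hG α hα0, h0])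
  rw [eq_add_single_of_ne_zero hαj] at hα
  exact ⟨α - Finsupp.single j 1, hα, (eq_add_single_of_ne_zero hαj).symm⟩

section Convergence

variable {A : Type*} [NormedCommRing A] {d : ℕ}

lemma IsConvergent.zero : IsConvergent (0 : MvPowerSeries (Fin d) A) :=
  fun _ _ _ => by simpa using tendsto_const_nhds

lemma IsConvergent.add {f g : MvPowerSeries (Fin d) A} (hf : IsConvergent f)
    (hg : IsConvergent g) : IsConvergent (f + g) := by
  intro r hr0 hr1
  have hfg := (hf r hr0 hr1).add (hg r hr0 hr1)
  rw [add_zero] at hfg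
  refine squeeze_zero (fun _ => by positivity) (fun α => ?_) hfg
  rw [map_add, ← add_mul]
  exact mul_le_mul_of_nonneg_right (norm_add_le _ _) (by positivity)

lemma IsConvergent.sum {ι : Type*} (s : Finset ι) {f : ι → MvPowerSeries (Fin d) A}
    (hf : ∀ i ∈ s, IsConvergent (f i)) : IsConvergent (∑ i ∈ s, f i) :=
  sum_induction f IsConvergent (fun _ _ => .add) .zero hf

lemma IsConvergent.zsmul {f : MvPowerSeries (Fin d) A} (hf : IsConvergent f) (n : ℤ) :
    IsConvergent (n • f) := by
  intro r hr0 hr1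
  have hnf := (hf r hr0 hr1).const_mul ‖n‖
  rw [mul_zero] at hnf
  refine squeeze_zero (fun _ => by positivity) (fun α => ?_) hnf
  rw [map_zsmul, ← mul_assoc]
  exact mul_le_mul_of_nonneg_right (norm_zsmul_le _ _) (by positivity)

lemma IsConvergent.X_mul {f : MvPowerSeries (Fin d) A} (hf : IsConvergent f) (j : Fin d) :
    IsConvergent (X j * f) := by
  intro r hr0 hr1
  refine tendsto_cofinite_of_add_single (G := fun α => ‖coeff α (X j * f)‖ * r ^ α.degree) j
    (fun α hα => by simp only [coeff_X_mul_of_eq_zero _ hα, norm_zero, zero_mul]) ?_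
  have hfr := (hf r hr0 hr1).mul_const r
  rw [zero_mul] at hfr
  refine hfr.congr fun β => ?_
  rw [coeff_add_single_X_mul, map_add, Finsupp.degree_single, pow_succ, mul_assoc]
  rfl

lemma IsConvergent.of_norm_coeff_le {f g : MvPowerSeries (Fin d) A} (hf : IsConvergent f) (c : ℕ)
    (h : ∀ α, ‖coeff α g‖ ≤ (α.degree + c) * ‖coeff α f‖) : IsConvergent g := by
  intro r hr0 hr1
  set ρ := (1 + r) / 2 with hρ
  have hρ0 : 0 < ρ := by positivity
  have hq0 : 0 ≤ r / ρ := by positivity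
  have hq1 : r / ρ < 1 := (div_lt_one hρ0).mpr (by linarith)
  obtain ⟨C, hC⟩ : ∃ C, ∀ n : ℕ, ((n : ℝ) + c) * (r / ρ) ^ n ≤ C := by
    obtain ⟨C, hC⟩ := ((tendsto_self_mul_const_pow_of_lt_one hq0 hq1).add
      ((tendsto_pow_atTop_nhds_zero_of_lt_one hq0 hq1).const_mul (c : ℝ))).bddAbove_range
    exact ⟨C, fun n => by simpa [add_mul] using hC ⟨n, rfl⟩⟩
  have hfC := (hf ρ hρ0.le (by linarith)).const_mul C
  rw [mul_zero] at hfC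
  refine squeeze_zero (fun _ => by positivity) (fun α => ?_) hfC
  calc ‖coeff α g‖ * r ^ α.degree ≤ (α.degree + c) * ‖coeff α f‖ * r ^ α.degree := by
        gcongr; exact h α
    _ = ((α.degree + c) * (r / ρ) ^ α.degree) * (‖coeff α f‖ * ρ ^ α.degree) := by
      rw [div_pow]
      field_simp
    _ ≤ C * (‖coeff α f‖ * ρ ^ α.degree) := by gcongr; exact hC _

end Convergence

namespace Koszul

variable {A : Type*} [NormedCommRing A] {d : ℕ}

lemma isConvergent_eulerContraction {ω : Finset (Fin d) → MvPowerSeries (Fin d) A}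
    (hω : ∀ s, IsConvergent (ω s)) (s : Finset (Fin d)) :
    IsConvergent (eulerContraction ω s) :=
  .sum _ fun j _ => ((hω _).X_mul j).zsmul _

lemma isConvergent_homotopy {𝕜 : Type*} [NormedField 𝕜] [NormedSpace 𝕜 A]
    (h𝕜 : ∀ n : ℕ, ‖(n : 𝕜)⁻¹‖ ≤ n)
    {ω : Finset (Fin d) → MvPowerSeries (Fin d) A} (hω : ∀ s, IsConvergent (ω s))
    (s : Finset (Fin d)) :
    IsConvergent (homotopy 𝕜 ω s) :=
  (isConvergent_eulerContraction hω s).of_norm_coeff_le #s fun α => by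
    rw [homotopy, coeff_eulerInv]
    refine (norm_smul_le _ _).trans ?_
    exact_mod_cast mul_le_mul_of_nonneg_right (h𝕜 _) (norm_nonneg _)

lemma isConvergent_extendByZero {k : ℕ}
    {ω : {s : Finset (Fin d) // #s = k} → MvPowerSeries (Fin d) A}
    (hω : ∀ s, IsConvergent (ω s)) (s : Finset (Fin d)) : IsConvergent (extendByZero ω s) := by
  unfold extendByZero
  split_ifs
  exacts [hω _, .zero]

end Koszul

lemma Padic.norm_natCast_inv_le {p : ℕ} [Fact p.Prime] (n : ℕ) :
    ‖(n : ℚ_[p])⁻¹‖ ≤ n := by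
  rcases eq_or_ne n 0 with rfl | hn
  · simp
  rw [norm_inv, Padic.norm_eq_zpow_neg_valuation (Nat.cast_ne_zero.mpr hn),
    Padic.valuation_natCast, zpow_neg, inv_inv, zpow_natCast]
  exact_mod_cast Nat.le_of_dvd (Nat.pos_of_ne_zero hn) pow_padicValNat_dvd

theorem statement10_general {p : ℕ} [Fact p.Prime] {A : Type*} [NormedCommRing A]
    [NormedAlgebra ℚ_[p] A] {d : ℕ} :
    -- the augmentation A → O(X) is injective …
    Function.Injective (MvPowerSeries.C (σ := Fin d) (R := A)) ∧
    -- … with image exactly the kernel of the 0-th Koszul differential (∂_1, …, ∂_d):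
    (∀ f : MvPowerSeries (Fin d) A, IsConvergent f →
      ((∀ i : Fin d, pderivPS i f = 0) ↔ ∃ a : A, f = MvPowerSeries.C (σ := Fin d) (R := A) a)) ∧
    -- and the Koszul complex is exact in all positive degrees:
    (∀ (k : ℕ) (ω : {s : Finset (Fin d) // s.card = k + 1} → MvPowerSeries (Fin d) A),
      (∀ s, IsConvergent (ω s)) → koszulD (k + 1) ω = 0 →
      ∃ η : {s : Finset (Fin d) // s.card = k} → MvPowerSeries (Fin d) A,
        (∀ s, IsConvergent (η s)) ∧ koszulD k η = ω) := by
  have : IsAddTorsionFree A :=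
    letI := Module.compHom A (algebraMap ℚ ℚ_[p])
    .of_module_rat A
  refine ⟨C_injective, fun f _ => forall_pderivPS_eq_zero_iff, fun k ω hω hclosed => ?_⟩
  exact ⟨fun t => Koszul.homotopy ℚ_[p] (Koszul.extendByZero ω) t.1,
    fun t => Koszul.isConvergent_homotopy Padic.norm_natCast_inv_le
      (Koszul.isConvergent_extendByZero hω) t.1,
    Koszul.koszulD_homotopy ℚ_[p] ω hclosed⟩

theorem statement10 {p : ℕ} [Fact p.Prime] {A : Type*} [NormedCommRing A]
    [NormedAlgebra ℚ_[p] A] [CompleteSpace A] {d : ℕ} :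
    -- the augmentation A → O(X) is injective …
    Function.Injective (MvPowerSeries.C (σ := Fin d) (R := A)) ∧
    -- … with image exactly the kernel of the 0-th Koszul differential (∂_1, …, ∂_d):
    (∀ f : MvPowerSeries (Fin d) A, IsConvergent f →
      ((∀ i : Fin d, pderivPS i f = 0) ↔ ∃ a : A, f = MvPowerSeries.C (σ := Fin d) (R := A) a)) ∧
    -- and the Koszul complex is exact in all positive degrees:
    (∀ (k : ℕ) (ω : {s : Finset (Fin d) // s.card = k + 1} → MvPowerSeries (Fin d) A),
      (∀ s, IsConvergent (ω s)) → koszulD (k + 1) ω = 0 →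
      ∃ η : {s : Finset (Fin d) // s.card = k} → MvPowerSeries (Fin d) A,
        (∀ s, IsConvergent (η s)) ∧ koszulD k η = ω) :=
  statement10_general (p := p)
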